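/- arXiv:2401.11741 — 2 statements merged into one kernel-verified Lean document; each statement's English description precedes it below -/
import Mathlib

section
/- Let n ≥ 1 and let S_n be the star graph on vertices {0,1,...,n-1}. The number of partial endomorphisms of S_n equals (n+1)^{n-1} + n^{n-1} + (n-1)·2^{n-1}. -/
def pmul {V : Type*} (f g : V → Option V) : V → Option V := fun x => (f x).bind g

def pdom {V : Type*} (f : V → Option V) : Set V := {x | f x ≠ none}

def pim {V : Type*} (f : V → Option V) : Set V := {y | ∃ x, f x = some y}

def pker {V : Type*} (f : V → Option V) : V → V → Prop := fun x y => f x ≠ none ∧ f x = f y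

def PInj {V : Type*} (f : V → Option V) : Prop := ∀ u v a, f u = some a → f v = some a → u = v

def edge {n : ℕ} (u v : Fin n) : Prop := (u.val = 0 ∧ v.val ≠ 0) ∨ (v.val = 0 ∧ u.val ≠ 0)

def IsPEnd {n : ℕ} (α : Fin n → Option (Fin n)) : Prop :=
  ∀ u v a b, α u = some a → α v = some b → edge u v → edge a b

def IsPwEnd {n : ℕ} (α : Fin n → Option (Fin n)) : Prop :=
  ∀ u v a b, α u = some a → α v = some b → edge u v → a ≠ b → edge a b

def IsPsEnd {n : ℕ} (α : Fin n → Option (Fin n)) : Prop :=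
  ∀ u v a b, α u = some a → α v = some b → (edge u v ↔ edge a b)

def IsPswEnd {n : ℕ} (α : Fin n → Option (Fin n)) : Prop :=
  ∀ u v a b, α u = some a → α v = some b → ((edge u v ∧ a ≠ b) ↔ edge a b)

def PEndS (n : ℕ) : Set (Fin n → Option (Fin n)) := {α | IsPEnd α}
def PwEndS (n : ℕ) : Set (Fin n → Option (Fin n)) := {α | IsPwEnd α}
def PsEndS (n : ℕ) : Set (Fin n → Option (Fin n)) := {α | IsPsEnd α}
def PswEndS (n : ℕ) : Set (Fin n → Option (Fin n)) := {α | IsPswEnd α}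
def IEndS (n : ℕ) : Set (Fin n → Option (Fin n)) := {α | PInj α ∧ IsPEnd α}
def PAutS (n : ℕ) : Set (Fin n → Option (Fin n)) := {α | PInj α ∧ IsPsEnd α}

def RegularIn {V : Type*} (M : Set (V → Option V)) (a : V → Option V) : Prop :=
  ∃ b ∈ M, pmul (pmul a b) a = a

def GreenL {V : Type*} (M : Set (V → Option V)) (a b : V → Option V) : Prop :=
  (∃ g ∈ M, a = pmul g b) ∧ (∃ g ∈ M, b = pmul g a)

def GreenR {V : Type*} (M : Set (V → Option V)) (a b : V → Option V) : Prop :=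
  (∃ g ∈ M, a = pmul b g) ∧ (∃ g ∈ M, b = pmul a g)

def GreenH {V : Type*} (M : Set (V → Option V)) (a b : V → Option V) : Prop :=
  GreenL M a b ∧ GreenR M a b

def GreenJ {V : Type*} (M : Set (V → Option V)) (a b : V → Option V) : Prop :=
  (∃ g ∈ M, ∃ h ∈ M, a = pmul (pmul g b) h) ∧ (∃ g ∈ M, ∃ h ∈ M, b = pmul (pmul g a) h)

/-!
Every edge of the star contains the centre `0`, so a partial map `α` is an endomorphism exactly
when each leaf is sent to a value allowed by `α 0`: anything if `α 0` is undefined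
(`n + 1` choices), anything but `0` if `α 0 = 0` (`n` choices), and only `0` or undefined if
`α 0` is a leaf (`2` choices). Summing over the `n + 1` possible values of `α 0` gives the count.
-/

open Finset

theorem Fin.ncard_setOf_forall_succ_mem {β : Type*} [Fintype β] (S : β → Finset β) (m : ℕ) :
    {f : Fin (m + 1) → β | ∀ i : Fin m, f i.succ ∈ S (f 0)}.ncard = ∑ b, #(S b) ^ m := by
  let e : {f : Fin (m + 1) → β // ∀ i : Fin m, f i.succ ∈ S (f 0)} ≃ Σ b, (Fin m → S b) :=
    ((Fin.consEquiv fun _ => β).subtypeEquiv fun _ => Iff.rfl).symm.trans <|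
      (Equiv.subtypeProdEquivSigmaSubtype fun b (g : Fin m → β) => ∀ i, g i ∈ S b).trans <|
        Equiv.sigmaCongrRight fun _ => Equiv.subtypePiEquivPi
  rw [← Nat.card_coe_set_eq, Set.coe_ofPred, Nat.card_congr e, Nat.card_sigma]
  simp [Nat.card_eq_fintype_card]

lemma edge_iff {m : ℕ} {u v : Fin (m + 1)} : edge u v ↔ (u = 0 ∧ v ≠ 0) ∨ (v = 0 ∧ u ≠ 0) := by
  simp only [edge, Fin.val_eq_zero_iff, ne_eq]

lemma edge_comm {n : ℕ} {u v : Fin n} : edge u v ↔ edge v u := or_comm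

lemma isPEnd_iff_forall_leaf {m : ℕ} (α : Fin (m + 1) → Option (Fin (m + 1))) :
    IsPEnd α ↔ ∀ i : Fin m, ∀ a b, α 0 = some a → α i.succ = some b → edge a b := by
  refine ⟨fun h i a b ha hb => h 0 i.succ a b ha hb (edge_iff.2 (.inl ⟨rfl, i.succ_ne_zero⟩)),
    fun h u v a b hu hv huv => ?_⟩
  rcases edge_iff.1 huv with ⟨rfl, hv0⟩ | ⟨rfl, hu0⟩
  · obtain ⟨i, rfl⟩ := Fin.exists_succ_eq.2 hv0
    exact h i a b hu hv
  · obtain ⟨i, rfl⟩ := Fin.exists_succ_eq.2 hu0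
    exact edge_comm.1 (h i b a hv hu)

def starLeafImages (m : ℕ) : Option (Fin (m + 1)) → Finset (Option (Fin (m + 1)))
  | none => univ
  | some a => if a = 0 then univ.erase (some 0) else {none, some 0}

lemma forall_edge_iff_mem_starLeafImages {m : ℕ} (o x : Option (Fin (m + 1))) :
    (∀ a b, o = some a → x = some b → edge a b) ↔ x ∈ starLeafImages m o := by
  rcases o with _ | a
  · simp [starLeafImages]
  rcases x with _ | b
  · by_cases ha : a = 0 <;> simp [starLeafImages, ha]
  · by_cases ha : a = 0 <;> simp [starLeafImages, ha, edge_iff]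

lemma card_starLeafImages_none (m : ℕ) : #(starLeafImages m none) = m + 2 := by
  simp [starLeafImages]

lemma card_starLeafImages_some_zero (m : ℕ) : #(starLeafImages m (some 0)) = m + 1 := by
  simp [starLeafImages, card_erase_of_mem]

lemma card_starLeafImages_some_succ {m : ℕ} (c : Fin m) :
    #(starLeafImages m (some c.succ)) = 2 := by
  simp [starLeafImages]

lemma ncard_pEndS_succ (m : ℕ) :
    (PEndS (m + 1)).ncard = (m + 2) ^ m + (m + 1) ^ m + m * 2 ^ m := by
  have : PEndS (m + 1) = {α | ∀ i : Fin m, α i.succ ∈ starLeafImages m (α 0)} := by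
    ext α
    simp only [PEndS, Set.mem_ofPred, isPEnd_iff_forall_leaf, forall_edge_iff_mem_starLeafImages]
  rw [this, Fin.ncard_setOf_forall_succ_mem, Fintype.sum_option, Fin.sum_univ_succ,
    card_starLeafImages_none, card_starLeafImages_some_zero]
  simp only [card_starLeafImages_some_succ, sum_const, card_univ, Fintype.card_fin, smul_eq_mul]
  ring

theorem stmt3 (n : ℕ) (hn : 1 ≤ n) :
    (PEndS n).ncard = (n + 1) ^ (n - 1) + n ^ (n - 1) + (n - 1) * 2 ^ (n - 1) := by
  obtain ⟨m, rfl⟩ := Nat.exists_eq_add_of_le' hn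
  simpa using ncard_pEndS_succ m
end

section
/- Let n ≥ 1, let S_n be the star graph on vertices {0,1,...,n-1}, and let M be PsEnd(S_n) or PswEnd(S_n). For α, β ∈ M, α J β in M if and only if |im(α)| = |im(β)| and, in case |im(α)| ≥ 2, additionally 0 ∈ dom(α) iff 0 ∈ dom(β). -/
/-!
Composing with partial maps cannot raise the rank, and a strong weak map reflects edges (an edge
between two images comes from an edge), so the rank and whether the image spans an edge are
invariant under `J`. For a strong weak map of rank at least two, the image spans an edge exactly
when the centre lies in the domain. Conversely, if the images of `α` and `β` have the same size and
both or neither span an edge, they induce isomorphic subgraphs of the star; such an isomorphism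
`e : im α ≃ im β` together with a section `σ` of `β` gives the strong maps `k = σ ∘ e` on `im α`
and `h = e⁻¹` on `im β`, with `α = (α k) β h`.
-/

section PartialMaps

variable {V : Type*}

open Classical in
noncomputable def partialOn (S : Set V) (f : S → V) : V → Option V :=
  fun x => if hx : x ∈ S then some (f ⟨x, hx⟩) else none

lemma partialOn_eq_some {S : Set V} {f : S → V} {x y : V} :
    partialOn S f x = some y ↔ ∃ hx : x ∈ S, f ⟨x, hx⟩ = y := by
  unfold partialOn
  split_ifs with hx <;> simp [hx]

lemma pim_pmul_subset (f g : V → Option V) : pim (pmul f g) ⊆ pim g := by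
  rintro y ⟨x, hx⟩
  obtain ⟨t, -, ht⟩ := Option.bind_eq_some_iff.1 hx
  exact ⟨t, ht⟩

lemma ncard_pim_pmul_le_left {f : V → Option V} (g : V → Option V) (hf : (pim f).Finite) :
    (pim (pmul f g)).ncard ≤ (pim f).ncard := by
  have hsub : pim (pmul f g) ⊆ (fun t => (g t).getD t) '' pim f := by
    rintro y ⟨x, hx⟩
    obtain ⟨t, hft, hgt⟩ := Option.bind_eq_some_iff.1 hx
    exact ⟨t, ⟨x, hft⟩, by simp [hgt]⟩
  exact (Set.ncard_le_ncard hsub (hf.image _)).trans (Set.ncard_image_le hf)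

lemma ncard_pim_pmul_pmul_le (g : V → Option V) {β : V → Option V} (h : V → Option V)
    (hβ : (pim β).Finite) : (pim (pmul (pmul g β) h)).ncard ≤ (pim β).ncard :=
  (ncard_pim_pmul_le_left h (hβ.subset (pim_pmul_subset g β))).trans
    (Set.ncard_le_ncard (pim_pmul_subset g β) hβ)

lemma eq_pmul_pmul_pmul_of_forall_mem_pim {α k β h : V → Option V}
    (H : ∀ t ∈ pim α, ((k t).bind β).bind h = some t) :
    α = pmul (pmul (pmul α k) β) h := by
  funext u
  cases hu : α u with
  | none => simp [pmul, hu]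
  | some t => simp [pmul, hu, H t ⟨u, hu⟩]

end PartialMaps

section Star

variable {n : ℕ}

lemma edge_irrefl (x : Fin n) : ¬ edge x x := by
  unfold edge
  omega

lemma isPswEnd_of_isPsEnd {γ : Fin n → Option (Fin n)} (hγ : IsPsEnd γ) : IsPswEnd γ := by
  intro u v a b hu hv
  rw [hγ u v a b hu hv]
  exact ⟨fun h => h.1, fun h => ⟨h, fun hab => edge_irrefl b (hab ▸ h)⟩⟩

lemma isPsEnd_pmul {f g : Fin n → Option (Fin n)} (hf : IsPsEnd f) (hg : IsPsEnd g) :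
    IsPsEnd (pmul f g) := by
  intro u v a b hu hv
  obtain ⟨c, hc, hca⟩ := Option.bind_eq_some_iff.1 hu
  obtain ⟨d, hd, hdb⟩ := Option.bind_eq_some_iff.1 hv
  exact (hf u v c d hc hd).trans (hg c d a b hca hdb)

lemma isPswEnd_pmul {f g : Fin n → Option (Fin n)} (hf : IsPswEnd f) (hg : IsPswEnd g) :
    IsPswEnd (pmul f g) := by
  intro u v a b hu hv
  obtain ⟨c, hc, hca⟩ := Option.bind_eq_some_iff.1 hu
  obtain ⟨d, hd, hdb⟩ := Option.bind_eq_some_iff.1 hv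
  rw [← hg c d a b hca hdb, ← hf u v c d hc hd]
  refine ⟨fun ⟨huv, hab⟩ => ⟨⟨huv, ?_⟩, hab⟩, fun ⟨⟨huv, _⟩, hab⟩ => ⟨huv, hab⟩⟩
  rintro rfl
  exact hab (Option.some_inj.1 (hca.symm.trans hdb))

/-- A strong weak map is strong along any choice of preimages. -/
lemma edge_iff_of_isPswEnd {β : Fin n → Option (Fin n)} (hβ : IsPswEnd β)
    {x y a b : Fin n} (hx : β x = some a) (hy : β y = some b) (hxy : a = b → x = y) :
    edge x y ↔ edge a b := by
  by_cases hab : a = b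
  · subst hab
    rw [hxy rfl]
    exact iff_of_false (edge_irrefl y) (edge_irrefl a)
  · rw [← hβ x y a b hx hy]
    exact (and_iff_left hab).symm

lemma isPsEnd_partialOn {S : Set (Fin n)} {f : S → Fin n}
    (hf : ∀ a b : S, edge (a : Fin n) b ↔ edge (f a) (f b)) : IsPsEnd (partialOn S f) := by
  intro u v a b hu hv
  obtain ⟨hu', rfl⟩ := partialOn_eq_some.1 hu
  obtain ⟨hv', rfl⟩ := partialOn_eq_some.1 hv
  exact hf ⟨u, hu'⟩ ⟨v, hv'⟩

section Monoid

variable {M : Set (Fin n → Option (Fin n))}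

lemma isPswEnd_of_mem (hM : M = PsEndS n ∨ M = PswEndS n) {γ : Fin n → Option (Fin n)}
    (hγ : γ ∈ M) : IsPswEnd γ := by
  rcases hM with rfl | rfl
  · exact isPswEnd_of_isPsEnd hγ
  · exact hγ

lemma mem_of_isPsEnd (hM : M = PsEndS n ∨ M = PswEndS n) {γ : Fin n → Option (Fin n)}
    (hγ : IsPsEnd γ) : γ ∈ M := by
  rcases hM with rfl | rfl
  · exact hγ
  · exact isPswEnd_of_isPsEnd hγ

lemma pmul_mem (hM : M = PsEndS n ∨ M = PswEndS n) {α k : Fin n → Option (Fin n)}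
    (hα : α ∈ M) (hk : IsPsEnd k) : pmul α k ∈ M := by
  rcases hM with rfl | rfl
  · exact isPsEnd_pmul hα hk
  · exact isPswEnd_pmul hα (isPswEnd_of_isPsEnd hk)

end Monoid

def HasEdge (S : Set (Fin n)) : Prop := ∃ a ∈ S, ∃ b ∈ S, edge a b

lemma HasEdge.mono {S T : Set (Fin n)} (hST : S ⊆ T) : HasEdge S → HasEdge T :=
  fun ⟨a, ha, b, hb, hab⟩ => ⟨a, hST ha, b, hST hb, hab⟩

lemma HasEdge.exists_val_eq_zero {S : Set (Fin n)} : HasEdge S → ∃ a ∈ S, a.val = 0 := by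
  rintro ⟨a, ha, b, hb, (⟨ha0, -⟩ | ⟨hb0, -⟩)⟩
  exacts [⟨a, ha, ha0⟩, ⟨b, hb, hb0⟩]

lemma hasEdge_pim_of_hasEdge_pim_pmul {f h : Fin n → Option (Fin n)}
    (hh : IsPswEnd h) (hE : HasEdge (pim (pmul f h))) : HasEdge (pim f) := by
  obtain ⟨a, ⟨x, hx⟩, b, ⟨y, hy⟩, hab⟩ := hE
  obtain ⟨c, hc, hca⟩ := Option.bind_eq_some_iff.1 hx
  obtain ⟨d, hd, hdb⟩ := Option.bind_eq_some_iff.1 hy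
  exact ⟨c, ⟨x, hc⟩, d, ⟨y, hd⟩, ((hh c d a b hca hdb).2 hab).1⟩

lemma hasEdge_pim_iff (hn : 1 ≤ n) {α : Fin n → Option (Fin n)} (hα : IsPswEnd α) :
    HasEdge (pim α) ↔ 2 ≤ (pim α).ncard ∧ (⟨0, hn⟩ : Fin n) ∈ pdom α := by
  constructor
  · rintro ⟨a, ⟨x, hx⟩, b, ⟨y, hy⟩, hab⟩
    have hab' : a ≠ b := fun h => edge_irrefl b (h ▸ hab)
    refine ⟨(Set.one_lt_ncard_iff (Set.toFinite _)).2 ⟨a, b, ⟨x, hx⟩, ⟨y, hy⟩, hab'⟩, ?_⟩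
    by_contra h0
    have hx0 : x ≠ ⟨0, hn⟩ := ne_of_mem_of_not_mem (show x ∈ pdom α by simp [pdom, hx]) h0
    have hy0 : y ≠ ⟨0, hn⟩ := ne_of_mem_of_not_mem (show y ∈ pdom α by simp [pdom, hy]) h0
    have hxy := ((hα x y a b hx hy).2 hab).1
    simp only [edge, ne_eq, Fin.ext_iff] at hx0 hy0 hxy
    omega
  · rintro ⟨hr, h0⟩
    obtain ⟨c, hc⟩ := Option.ne_none_iff_exists'.1 h0
    obtain ⟨t, ⟨u, hu⟩, htc⟩ := Set.exists_ne_of_one_lt_ncard hr c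
    have hu0 : u.val ≠ 0 := by
      intro h
      rw [show u = ⟨0, hn⟩ from Fin.ext h, hc] at hu
      exact htc (Option.some_inj.1 hu).symm
    exact ⟨c, ⟨_, hc⟩, t, ⟨u, hu⟩, (hα _ u c t hc hu).1 ⟨Or.inl ⟨rfl, hu0⟩, htc.symm⟩⟩

lemma exists_equiv_edge_iff {S T : Set (Fin n)} (hcard : S.ncard = T.ncard)
    (hE : HasEdge S ↔ HasEdge T) :
    ∃ e : S ≃ T, ∀ a b : S, edge (a : Fin n) b ↔ edge (e a : Fin n) (e b) := by
  obtain ⟨e₀⟩ : Nonempty (S ≃ T) := by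
    rwa [← Finite.card_eq, Nat.card_coe_set_eq, Nat.card_coe_set_eq]
  by_cases hS : HasEdge S
  · obtain ⟨a₀, ha₀, ha₀0⟩ := hS.exists_val_eq_zero
    obtain ⟨b₀, hb₀, hb₀0⟩ := (hE.1 hS).exists_val_eq_zero
    -- route the centre to the centre
    let e := e₀.trans (Equiv.swap (e₀ ⟨a₀, ha₀⟩) ⟨b₀, hb₀⟩)
    have he₀ : e ⟨a₀, ha₀⟩ = ⟨b₀, hb₀⟩ := by simp [e]
    have hzero : ∀ a : S, (e a : Fin n).val = 0 ↔ (a : Fin n).val = 0 := by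
      intro a
      constructor
      · intro h
        have : e a = e ⟨a₀, ha₀⟩ := by rw [he₀]; exact Subtype.ext (Fin.ext (h.trans hb₀0.symm))
        rw [e.injective this]
        exact ha₀0
      · intro h
        rw [show a = ⟨a₀, ha₀⟩ from Subtype.ext (Fin.ext (h.trans ha₀0.symm)), he₀]
        exact hb₀0
    refine ⟨e, fun a b => ?_⟩
    have ha := hzero a
    have hb := hzero b
    unfold edge
    omega
  · exact ⟨e₀, fun a b => iff_of_false (fun h => hS ⟨a, a.2, b, b.2, h⟩)
      (fun h => hS (hE.2 ⟨_, (e₀ a).2, _, (e₀ b).2, h⟩))⟩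

lemma exists_isPsEnd_eq_pmul_pmul_pmul {α β : Fin n → Option (Fin n)} (hβ : IsPswEnd β)
    (e : pim α ≃ pim β) (he : ∀ a b : pim α, edge (a : Fin n) b ↔ edge (e a : Fin n) (e b)) :
    ∃ k h, IsPsEnd k ∧ IsPsEnd h ∧ α = pmul (pmul (pmul α k) β) h := by
  choose σ hσ using fun s : pim β => s.2
  refine ⟨partialOn (pim α) (fun a => σ (e a)), partialOn (pim β) (fun b => e.symm b), ?_, ?_, ?_⟩
  · refine isPsEnd_partialOn fun a b => (he a b).trans ?_
    refine (edge_iff_of_isPswEnd hβ (hσ (e a)) (hσ (e b)) fun hab => ?_).symm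
    rw [Subtype.ext hab]
  · refine isPsEnd_partialOn fun a b => ?_
    rw [he, Equiv.apply_symm_apply, Equiv.apply_symm_apply]
  · refine eq_pmul_pmul_pmul_of_forall_mem_pim fun t ht => ?_
    simp [partialOn, ht, hσ]

end Star

theorem stmt18 (n : ℕ) (hn : 1 ≤ n) (M : Set (Fin n → Option (Fin n)))
    (hM : M = PsEndS n ∨ M = PswEndS n)
    (α β : Fin n → Option (Fin n)) (hα : α ∈ M) (hβ : β ∈ M) :
    GreenJ M α β ↔
      ((pim α).ncard = (pim β).ncard
        ∧ (2 ≤ (pim α).ncard →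
            ((⟨0, hn⟩ : Fin n) ∈ pdom α ↔ (⟨0, hn⟩ : Fin n) ∈ pdom β))) := by
  have invariant : ∀ {γ δ}, (∃ g ∈ M, ∃ h ∈ M, γ = pmul (pmul g δ) h) →
      (pim γ).ncard ≤ (pim δ).ncard ∧ (HasEdge (pim γ) → HasEdge (pim δ)) := by
    rintro γ δ ⟨g, -, h, hh, rfl⟩
    exact ⟨ncard_pim_pmul_pmul_le g h (Set.toFinite _), fun hE =>
      (hasEdge_pim_of_hasEdge_pim_pmul (isPswEnd_of_mem hM hh) hE).mono (pim_pmul_subset g δ)⟩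
  have factor : ∀ {γ δ}, γ ∈ M → δ ∈ M → (pim γ).ncard = (pim δ).ncard →
      (HasEdge (pim γ) ↔ HasEdge (pim δ)) → ∃ g ∈ M, ∃ h ∈ M, γ = pmul (pmul g δ) h := by
    intro γ δ hγ hδ hr hE
    obtain ⟨e, he⟩ := exists_equiv_edge_iff hr hE
    obtain ⟨k, h, hk, hh, hfac⟩ := exists_isPsEnd_eq_pmul_pmul_pmul (isPswEnd_of_mem hM hδ) e he
    exact ⟨_, pmul_mem hM hγ hk, h, mem_of_isPsEnd hM hh, hfac⟩
  have hJ : GreenJ M α β ↔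
      (pim α).ncard = (pim β).ncard ∧ (HasEdge (pim α) ↔ HasEdge (pim β)) := by
    constructor
    · rintro ⟨hαβ, hβα⟩
      exact ⟨(invariant hαβ).1.antisymm (invariant hβα).1, (invariant hαβ).2, (invariant hβα).2⟩
    · rintro ⟨hr, hE⟩
      exact ⟨factor hα hβ hr hE, factor hβ hα hr.symm hE.symm⟩
  rw [hJ, hasEdge_pim_iff hn (isPswEnd_of_mem hM hα), hasEdge_pim_iff hn (isPswEnd_of_mem hM hβ)]
  constructor <;> rintro ⟨hr, hdom⟩ <;> refine ⟨hr, ?_⟩ <;> rw [← hr] at * <;> tauto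
end
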